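/- arXiv:math/0601107 — 3 statements merged into one kernel-verified Lean document; each statement's English description precedes it below -/
import Mathlib

section
/- Let Ω ⊆ ℂⁿ (n ≥ 2) be a Λ-nonisotropically balanced domain with Ω ≠ ℂⁿ, and let P_Λ : ℂⁿ → ℂⁿ be the map P_Λ(z_1,…,z_n) = (z_1^{λ_1}, …, z_n^{λ_n}). Then ω := P_Λ^{-1}(Ω) is a balanced domain in ℂⁿ (i.e., if z ∈ ω and |ζ| ≤ 1 then ζz ∈ ω), and the Minkowski functional M_ω(z) := inf{t > 0 : z/t ∈ ω} of ω satisfies M_ω(z) = h_{Λ,Ω}(P_Λ(z)) for all z ∈ ℂⁿ. -/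
/-!
`P_Λ` intertwines the two actions of the unit disc: `P_Λ(ζ z) = (ζ^{λ_j} P_Λ(z)_j)_j`. Hence
`ω = P_Λ⁻¹(Ω)` is balanced, so star-shaped about `0 ∈ ω` and connected, and `z/t ∈ ω` exactly when
`(P_Λ(z)_j / t^{λ_j})_j ∈ Ω`, so both Minkowski functionals are infima of the same set of `t`.
-/

open Set Metric

/-- `Ω` is `Λ`-nonisotropically balanced: `z ∈ Ω` and `|ζ| ≤ 1` imply
`(ζ^{λ₁} z₁, …, ζ^{λₙ} zₙ) ∈ Ω`. -/
def NonisotropicallyBalanced {n : ℕ} (Λ : Fin n → ℕ) (Ω : Set (Fin n → ℂ)) : Prop :=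
  ∀ z ∈ Ω, ∀ ζ : ℂ, ‖ζ‖ ≤ 1 → (fun j : Fin n => ζ ^ Λ j * z j) ∈ Ω

/-- The Minkowski `Λ`-functional `h_{Λ,Ω}(z) = inf{t > 0 : (z₁/t^{λ₁},…,zₙ/t^{λₙ}) ∈ Ω}`. -/
noncomputable def minkLam {n : ℕ} (Λ : Fin n → ℕ) (Ω : Set (Fin n → ℂ))
    (z : Fin n → ℂ) : ℝ :=
  sInf {t : ℝ | 0 < t ∧ (fun j : Fin n => z j / (t : ℂ) ^ Λ j) ∈ Ω}

/-- The proper map `P_Λ(z₁,…,zₙ) = (z₁^{λ₁},…,zₙ^{λₙ})`. -/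
def PLam {n : ℕ} (Λ : Fin n → ℕ) (z : Fin n → ℂ) : Fin n → ℂ :=
  fun j => z j ^ Λ j

/-- The (classical, isotropic) Minkowski functional `M_G(z) = inf{t > 0 : z/t ∈ G}`. -/
noncomputable def mink {n : ℕ} (G : Set (Fin n → ℂ)) (z : Fin n → ℂ) : ℝ :=
  sInf {t : ℝ | 0 < t ∧ (t : ℂ)⁻¹ • z ∈ G}

theorem Balanced.restrictScalars {𝕜 𝕜' E : Type*} [NormedField 𝕜] [NormedRing 𝕜']
    [NormOneClass 𝕜'] [NormedAlgebra 𝕜 𝕜'] [AddCommMonoid E] [Module 𝕜 E] [Module 𝕜' E]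
    [IsScalarTower 𝕜 𝕜' E] {s : Set E} (hs : Balanced 𝕜' s) : Balanced 𝕜 s :=
  balanced_iff_smul_mem.2 fun a ha x hx => by
    rw [← algebraMap_smul 𝕜']
    exact hs.smul_mem (by rwa [norm_algebraMap']) hx

theorem Balanced.isPathConnected {E : Type*} [AddCommGroup E] [Module ℂ E] [TopologicalSpace E]
    [ContinuousAdd E] [ContinuousSMul ℝ E] {s : Set E} (hs : Balanced ℂ s) (h0 : 0 ∈ s) :
    IsPathConnected s :=
  (hs.restrictScalars (𝕜 := ℝ)).starConvex.isPathConnected h0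

section PLam

variable {n : ℕ} (Λ : Fin n → ℕ)

theorem PLam_smul (ζ : ℂ) (z : Fin n → ℂ) : PLam Λ (ζ • z) = fun j => ζ ^ Λ j * PLam Λ z j :=
  funext fun j => mul_pow ζ (z j) (Λ j)

theorem PLam_zero {Λ : Fin n → ℕ} (hΛ : ∀ j, Λ j ≠ 0) : PLam Λ 0 = 0 :=
  funext fun j => zero_pow (hΛ j)

theorem continuous_PLam : Continuous (PLam Λ) :=
  continuous_pi fun j => (continuous_apply j).pow (Λ j)

theorem NonisotropicallyBalanced.balanced_preimage_PLam {Λ : Fin n → ℕ} {Ω : Set (Fin n → ℂ)}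
    (hΩ : NonisotropicallyBalanced Λ Ω) : Balanced ℂ (PLam Λ ⁻¹' Ω) :=
  balanced_iff_smul_mem.2 fun ζ hζ z hz => by
    rw [mem_preimage, PLam_smul]
    exact hΩ _ hz ζ hζ

theorem mink_preimage_PLam (Ω : Set (Fin n → ℂ)) (z : Fin n → ℂ) :
    mink (PLam Λ ⁻¹' Ω) z = minkLam Λ Ω (PLam Λ z) := by
  unfold mink minkLam
  congr! 4 with t
  rw [mem_preimage, PLam_smul]
  simp only [inv_pow, div_eq_inv_mul]

end PLam

theorem preimage_PLam_balanced_domain_and_mink_eq_general (n : ℕ)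
    (Λ : Fin n → ℕ) (hΛ : ∀ j, 0 < Λ j)
    (Ω : Set (Fin n → ℂ)) (hopen : IsOpen Ω)
    (h0 : (0 : Fin n → ℂ) ∈ Ω) (hbal : NonisotropicallyBalanced Λ Ω) :
    (IsOpen (PLam Λ ⁻¹' Ω) ∧ IsConnected (PLam Λ ⁻¹' Ω) ∧
      ∀ z ∈ PLam Λ ⁻¹' Ω, ∀ ζ : ℂ, ‖ζ‖ ≤ 1 → ζ • z ∈ PLam Λ ⁻¹' Ω) ∧
    ∀ z : Fin n → ℂ, mink (PLam Λ ⁻¹' Ω) z = minkLam Λ Ω (PLam Λ z) := by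
  have hω : Balanced ℂ (PLam Λ ⁻¹' Ω) := hbal.balanced_preimage_PLam
  have hω0 : (0 : Fin n → ℂ) ∈ PLam Λ ⁻¹' Ω := by
    rwa [mem_preimage, PLam_zero fun j => (hΛ j).ne']
  exact ⟨⟨hopen.preimage (continuous_PLam Λ), (hω.isPathConnected hω0).isConnected,
    fun _ hz _ hζ => hω.smul_mem hζ hz⟩, mink_preimage_PLam Λ Ω⟩

theorem preimage_PLam_balanced_domain_and_mink_eq (n : ℕ) (hn : 2 ≤ n)
    (Λ : Fin n → ℕ) (hΛ : ∀ j, 0 < Λ j)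
    (Ω : Set (Fin n → ℂ)) (hopen : IsOpen Ω) (hconn : IsConnected Ω)
    (h0 : (0 : Fin n → ℂ) ∈ Ω) (hbal : NonisotropicallyBalanced Λ Ω)
    (hne : Ω ≠ Set.univ) :
    (IsOpen (PLam Λ ⁻¹' Ω) ∧ IsConnected (PLam Λ ⁻¹' Ω) ∧
      ∀ z ∈ PLam Λ ⁻¹' Ω, ∀ ζ : ℂ, ‖ζ‖ ≤ 1 → ζ • z ∈ PLam Λ ⁻¹' Ω) ∧
    ∀ z : Fin n → ℂ, mink (PLam Λ ⁻¹' Ω) z = minkLam Λ Ω (PLam Λ z) :=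
  preimage_PLam_balanced_domain_and_mink_eq_general n Λ hΛ Ω hopen h0 hbal
end

section
/- Let ζ_1, ζ_2 ∈ D and s = (s_1,…,s_n) ∈ G_n. If there exists a holomorphic map f : D → G_n with f(ζ_1) = 0 and f(ζ_2) = s, then max{ inf{tⁿ : t > 0 and (1/t) sup_{|z|=1/t} |F_s(z)| < 1}, sup_{|z|=1} |F_s(z)| } ≤ |(ζ_2 − ζ_1)/(1 − conj(ζ_1) ζ_2)|. -/
open Set Metric

/-- The symmetrized polydisc `Gₙ ⊂ ℂⁿ`: the set of `(s₁,…,sₙ)` such that all roots of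
`zⁿ − s₁ z^{n−1} + s₂ z^{n−2} − … + (−1)ⁿ sₙ` lie in the open unit disc. -/
def symPolydisc (n : ℕ) : Set (Fin n → ℂ) :=
  {s | ∀ z : ℂ,
    z ^ n + ∑ j : Fin n, (-1 : ℂ) ^ ((j : ℕ) + 1) * s j * z ^ (n - ((j : ℕ) + 1)) = 0 →
      ‖z‖ < 1}

/-- Numerator of Costara's rational function `F_s`:
`(−1)ⁿ n sₙ z^{n−1} + … + (−s₁) = ∑_{j=1}^{n} (−1)^j j s_j z^{j−1}`. -/
noncomputable def Fnum {n : ℕ} (s : Fin n → ℂ) (z : ℂ) : ℂ :=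
  ∑ j : Fin n, (-1 : ℂ) ^ ((j : ℕ) + 1) * (((j : ℕ) : ℂ) + 1) * s j * z ^ (j : ℕ)

/-- Denominator of Costara's rational function `F_s`:
`n − (n−1) s₁ z + … + (−1)^{n−1} s_{n−1} z^{n−1} = ∑_{j=0}^{n} (−1)^j (n−j) s_j z^j`
(with `s₀ = 1`). -/
noncomputable def Fden {n : ℕ} (s : Fin n → ℂ) (z : ℂ) : ℂ :=
  (n : ℂ) + ∑ j : Fin n,
    (-1 : ℂ) ^ ((j : ℕ) + 1) * ((n : ℂ) - (((j : ℕ) : ℂ) + 1)) * s j * z ^ ((j : ℕ) + 1)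

/-- Costara's rational function `F_s`. -/
noncomputable def Frat {n : ℕ} (s : Fin n → ℂ) (z : ℂ) : ℂ :=
  Fnum s z / Fden s z

/-!
Write the polynomial of `σ ∈ Gₙ` as `∏ (z - λᵢ)` with `|λᵢ| < 1`, and let `q(y) = ∏ (1 - λᵢ y)` be
its reversal. Then `F_σ = q' / (n q - z q')`, so with `S = ∑ (1 - λᵢ z)⁻¹` one gets
`z F_σ(z) = (n - S) / S`. As `Re (1 - a)⁻¹ > 1/2` for `|a| < 1`, we have `Re S > n/2`, hence
`|z F_σ(z)| < 1`, whenever all `|λᵢ z| < 1` (Costara's estimate).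

Both bounds then come from the Schwarz–Pick lemma. For `|ω| = 1` the map `μ ↦ F_{f μ}(ω)` sends
`D` into `D` and vanishes at `ζ₁`, which bounds the supremum over the unit circle. For a root `λ`
of the polynomial of `s`, the finite Blaschke product `μ ↦ p_{f μ}(λ) / q_{f μ}(λ̄)` vanishes at
`ζ₂` and has modulus `|λ|ⁿ` at `ζ₁`, so every root satisfies `|λ|ⁿ ≤ d(ζ₁, ζ₂)`, the
pseudo-hyperbolic distance. For `tⁿ` slightly above `d(ζ₁, ζ₂)` all roots then lie in the disc
of radius `t`, and Costara's estimate on the circle `|z| = 1/t` shows that `tⁿ` belongs to the set whose infimum is taken.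
-/

open ComplexConjugate

section SchwarzPick

open Complex

noncomputable def pseudoDist (a b : ℂ) : ℝ := ‖(b - a) / (1 - conj a * b)‖

lemma normSq_one_sub_conj_mul_sub_normSq_sub (a b : ℂ) :
    normSq (1 - conj a * b) - normSq (b - a) = (1 - normSq a) * (1 - normSq b) := by
  simp only [normSq_apply, sub_re, sub_im, mul_re, mul_im, one_re, one_im, conj_re, conj_im]
  ring

lemma norm_sub_lt_norm_one_sub_conj_mul {a b : ℂ} (ha : ‖a‖ < 1) (hb : ‖b‖ < 1) :
    ‖b - a‖ < ‖1 - conj a * b‖ := by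
  have hab := normSq_one_sub_conj_mul_sub_normSq_sub a b
  rw [normSq_eq_norm_sq, normSq_eq_norm_sq, normSq_eq_norm_sq, normSq_eq_norm_sq] at hab
  have : ‖b - a‖ ^ 2 < ‖1 - conj a * b‖ ^ 2 := by
    nlinarith [mul_pos (by nlinarith [norm_nonneg a] : 0 < 1 - ‖a‖ ^ 2)
      (by nlinarith [norm_nonneg b] : 0 < 1 - ‖b‖ ^ 2)]
  exact lt_of_pow_lt_pow_left₀ 2 (norm_nonneg _) this

lemma one_sub_conj_mul_ne_zero {a b : ℂ} (ha : ‖a‖ < 1) (hb : ‖b‖ < 1) :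
    1 - conj a * b ≠ 0 :=
  norm_pos_iff.mp ((norm_nonneg _).trans_lt (norm_sub_lt_norm_one_sub_conj_mul ha hb))

lemma pseudoDist_lt_one {a b : ℂ} (ha : ‖a‖ < 1) (hb : ‖b‖ < 1) : pseudoDist a b < 1 := by
  rw [pseudoDist, norm_div, div_lt_one (norm_pos_iff.mpr (one_sub_conj_mul_ne_zero ha hb))]
  exact norm_sub_lt_norm_one_sub_conj_mul ha hb

lemma pseudoDist_comm (a b : ℂ) : pseudoDist a b = pseudoDist b a := by
  rw [pseudoDist, pseudoDist, norm_div, norm_div, norm_sub_rev, ← norm_conj (1 - conj b * a)]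
  congr 2
  simp only [map_sub, map_one, map_mul, conj_conj]
  ring

noncomputable def mobius (a z : ℂ) : ℂ := (z + a) / (1 + conj a * z)

lemma one_add_conj_mul_ne_zero {a z : ℂ} (ha : ‖a‖ < 1) (hz : ‖z‖ < 1) :
    1 + conj a * z ≠ 0 := by
  simpa using one_sub_conj_mul_ne_zero (a := -a) (by simpa using ha) hz

lemma mobius_mapsTo_ball {a : ℂ} (ha : ‖a‖ < 1) : MapsTo (mobius a) (ball 0 1) (ball 0 1) := by
  intro z hz
  rw [mem_ball_zero_iff] at hz ⊢
  rw [mobius, norm_div, div_lt_one (norm_pos_iff.mpr (one_add_conj_mul_ne_zero ha hz))]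
  simpa using norm_sub_lt_norm_one_sub_conj_mul (a := -a) (by simpa using ha) hz

lemma differentiableOn_mobius {a : ℂ} (ha : ‖a‖ < 1) : DifferentiableOn ℂ (mobius a) (ball 0 1) :=
  fun z hz => by
    refine (DifferentiableAt.div (by fun_prop) (by fun_prop) ?_).differentiableWithinAt
    exact one_add_conj_mul_ne_zero ha (mem_ball_zero_iff.mp hz)

lemma mobius_div_one_sub_conj_mul {a b : ℂ} (ha : ‖a‖ < 1) (hb : ‖b‖ < 1) :
    mobius a ((b - a) / (1 - conj a * b)) = b := by
  have hD : 1 - b * conj a ≠ 0 := by rw [mul_comm]; exact one_sub_conj_mul_ne_zero ha hb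
  have hden := one_add_conj_mul_ne_zero ha (pseudoDist_lt_one ha hb)
  have hnum : (b - a) / (1 - conj a * b) + a = b * (1 + conj a * ((b - a) / (1 - conj a * b))) := by
    field_simp
    ring
  rw [mobius, hnum, mul_div_cancel_right₀ _ hden]

theorem norm_le_pseudoDist_of_mapsTo_ball {h : ℂ → ℂ} (hd : DifferentiableOn ℂ h (ball 0 1))
    (hm : MapsTo h (ball 0 1) (closedBall 0 1)) {a b : ℂ} (ha : ‖a‖ < 1) (hb : ‖b‖ < 1)
    (h0 : h a = 0) : ‖h b‖ ≤ pseudoDist a b := by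
  have hc : ‖(b - a) / (1 - conj a * b)‖ < 1 := pseudoDist_lt_one ha hb
  have hschwarz := Complex.norm_le_norm_of_mapsTo_ball
    (hd.comp (differentiableOn_mobius ha) (mobius_mapsTo_ball ha))
    (hm.comp (mobius_mapsTo_ball ha)) (by simp [mobius, h0]) hc
  rwa [Function.comp_apply, mobius_div_one_sub_conj_mul ha hb] at hschwarz

end SchwarzPick

noncomputable def symPoly {n : ℕ} (σ : Fin n → ℂ) (z : ℂ) : ℂ :=
  z ^ n + ∑ j : Fin n, (-1 : ℂ) ^ ((j : ℕ) + 1) * σ j * z ^ (n - ((j : ℕ) + 1))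

noncomputable def symPolyRev {n : ℕ} (σ : Fin n → ℂ) (y : ℂ) : ℂ :=
  1 + ∑ j : Fin n, (-1 : ℂ) ^ ((j : ℕ) + 1) * σ j * y ^ ((j : ℕ) + 1)

section Roots

open Polynomial

lemma Polynomial.Monic.exists_fin_roots {K : Type*} [Field K] [IsAlgClosed K] {p : K[X]}
    (hp : p.Monic) {n : ℕ} (hn : p.natDegree = n) :
    ∃ r : Fin n → K, (∀ i, p.IsRoot (r i)) ∧ ∀ z, p.eval z = ∏ i, (z - r i) := by
  have hsplits : Splits p := IsAlgClosed.splits p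
  obtain ⟨l, hl⟩ : ∃ l : List K, (l : Multiset K) = p.roots := Quotient.exists_rep _
  have hlen : l.length = n := by
    rw [← hn, ← (splits_iff_card_roots).mp hsplits, ← hl, Multiset.coe_card]
  subst hlen
  refine ⟨fun i => l[i], fun i => ?_, fun z => ?_⟩
  · have hroot : l[i] ∈ p.roots := hl ▸ Multiset.mem_coe.mpr (List.getElem_mem _)
    exact (mem_roots hp.ne_zero).mp hroot
  · rw [hsplits.eq_prod_roots_of_monic hp, eval_multiset_prod, Multiset.map_map, ← hl,
      Multiset.map_coe, Multiset.prod_coe, ← Fin.prod_univ_fun_getElem]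
    simp

lemma exists_roots_of_mem_symPolydisc {n : ℕ} {σ : Fin n → ℂ} (hσ : σ ∈ symPolydisc n) :
    ∃ r : Fin n → ℂ, (∀ i, ‖r i‖ < 1) ∧ ∀ z, symPoly σ z = ∏ i, (z - r i) := by
  set q : ℂ[X] := ∑ j : Fin n, C ((-1 : ℂ) ^ ((j : ℕ) + 1) * σ j) * X ^ (n - ((j : ℕ) + 1))
  have heval : ∀ z, (X ^ n + q).eval z = symPoly σ z := by
    simp [q, symPoly, eval_finsetSum, mul_assoc]
  have hq : q.degree < (X ^ n : ℂ[X]).degree := by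
    rw [degree_X_pow]
    refine (degree_sum_le _ _).trans_lt ((Finset.sup_lt_iff (WithBot.bot_lt_coe n)).mpr ?_)
    intro j _
    refine (degree_C_mul_X_pow_le _ _).trans_lt ?_
    exact WithBot.coe_lt_coe.mpr (Nat.sub_lt_of_pos_le (Nat.succ_pos _) j.2)
  have hdeg : (X ^ n + q).natDegree = n := by
    rw [natDegree_add_eq_left_of_degree_lt hq, natDegree_X_pow]
  obtain ⟨r, hroot, hr⟩ := ((monic_X_pow n).add_of_left hq).exists_fin_roots hdeg
  refine ⟨r, fun i => hσ _ ?_, fun z => (heval z).symm.trans (hr z)⟩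
  exact (heval _).symm.trans (hroot i)

end Roots

section Costara

open Complex

variable {n : ℕ}

lemma symPolyRev_eq_pow_mul_symPoly_inv (σ : Fin n → ℂ) {y : ℂ} (hy : y ≠ 0) :
    symPolyRev σ y = y ^ n * symPoly σ y⁻¹ := by
  rw [symPolyRev, symPoly, mul_add, Finset.mul_sum, inv_pow, mul_inv_cancel₀ (pow_ne_zero n hy)]
  congr 1
  refine Finset.sum_congr rfl fun j _ => ?_
  have hj : (j : ℕ) + 1 ≤ n := j.2
  rw [mul_left_comm, inv_pow, ← pow_sub₀ y hy (Nat.sub_le n _), Nat.sub_sub_self hj]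

lemma symPolyRev_eq_prod {σ r : Fin n → ℂ} (hr : ∀ z, symPoly σ z = ∏ i, (z - r i)) (y : ℂ) :
    symPolyRev σ y = ∏ i, (1 - r i * y) := by
  rcases eq_or_ne y 0 with rfl | hy
  · simp [symPolyRev]
  rw [symPolyRev_eq_pow_mul_symPoly_inv σ hy, hr, ← Fin.prod_const n y, ← Finset.prod_mul_distrib]
  refine Finset.prod_congr rfl fun i _ => ?_
  rw [mul_sub, mul_inv_cancel₀ hy, mul_comm y]

lemma hasDerivAt_symPolyRev (σ : Fin n → ℂ) (z : ℂ) : HasDerivAt (symPolyRev σ) (Fnum σ z) z := by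
  have h : HasDerivAt (symPolyRev σ) _ z :=
    (HasDerivAt.fun_sum (u := Finset.univ) fun (j : Fin n) _ =>
      (hasDerivAt_pow ((j : ℕ) + 1) z).const_mul ((-1 : ℂ) ^ ((j : ℕ) + 1) * σ j)).const_add 1
  refine h.congr_deriv (Finset.sum_congr rfl fun j _ => ?_)
  rw [Nat.add_sub_cancel]
  push_cast
  ring

lemma fden_eq (σ : Fin n → ℂ) (z : ℂ) : Fden σ z = n * symPolyRev σ z - z * Fnum σ z := by
  rw [Fden, Fnum, symPolyRev, mul_add, mul_one, Finset.mul_sum, Finset.mul_sum, add_sub_assoc,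
    ← Finset.sum_sub_distrib]
  congr 1
  refine Finset.sum_congr rfl fun j _ => ?_
  ring

lemma mul_fnum_eq {σ r : Fin n → ℂ} (hr : ∀ y, symPolyRev σ y = ∏ i, (1 - r i * y)) {z : ℂ}
    (hz : ∀ i, 1 - r i * z ≠ 0) :
    z * Fnum σ z = symPolyRev σ z * (n - ∑ i, (1 - r i * z)⁻¹) := by
  have hQ : symPolyRev σ z ≠ 0 := by
    rw [hr]; exact Finset.prod_ne_zero_iff.mpr fun i _ => hz i
  have hlog : Fnum σ z / symPolyRev σ z = ∑ i, -r i / (1 - r i * z) := by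
    rw [← (hasDerivAt_symPolyRev σ z).deriv, ← logDeriv_apply, funext hr,
      logDeriv_prod (fun i _ => hz i) (fun i _ => by fun_prop)]
    refine Finset.sum_congr rfl fun i _ => ?_
    simp [logDeriv_apply]
  calc z * Fnum σ z = symPolyRev σ z * (z * (Fnum σ z / symPolyRev σ z)) := by field_simp
    _ = symPolyRev σ z * ∑ i, (1 - (1 - r i * z)⁻¹) := by
      rw [hlog, Finset.mul_sum]
      congr 1
      refine Finset.sum_congr rfl fun i _ => ?_
      linear_combination mul_inv_cancel₀ (hz i)
    _ = symPolyRev σ z * (n - ∑ i, (1 - r i * z)⁻¹) := by simp [Finset.sum_sub_distrib]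

lemma half_lt_re_inv_one_sub {a : ℂ} (ha : ‖a‖ < 1) : 1 / 2 < ((1 - a)⁻¹).re := by
  have ha' : normSq a < 1 := by rw [normSq_eq_norm_sq]; nlinarith [norm_nonneg a]
  have hpos : 0 < normSq (1 - a) :=
    normSq_pos.mpr (sub_ne_zero.mpr fun h => by simp [← h] at ha)
  rw [inv_re, lt_div_iff₀ hpos]
  simp only [normSq_apply, sub_re, sub_im, one_re, one_im] at ha' ⊢
  nlinarith

lemma norm_ofReal_sub_lt_norm {c : ℝ} (hc : 0 < c) {S : ℂ} (h : c / 2 < S.re) :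
    ‖(c : ℂ) - S‖ < ‖S‖ := by
  refine lt_of_pow_lt_pow_left₀ 2 (norm_nonneg _) ?_
  simp only [Complex.sq_norm, normSq_apply, sub_re, sub_im, ofReal_re, ofReal_im]
  nlinarith

theorem fden_ne_zero_and_norm_mul_frat_lt_one (hn : 0 < n) {σ r : Fin n → ℂ}
    (hr : ∀ y, symPolyRev σ y = ∏ i, (1 - r i * y)) {z : ℂ} (hz : ∀ i, ‖r i * z‖ < 1) :
    Fden σ z ≠ 0 ∧ ‖z * Frat σ z‖ < 1 := by
  set S := ∑ i, (1 - r i * z)⁻¹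
  have hu : ∀ i, 1 - r i * z ≠ 0 := fun i => sub_ne_zero.mpr fun h => by simpa [← h] using hz i
  have hQ : symPolyRev σ z ≠ 0 := by
    rw [hr]; exact Finset.prod_ne_zero_iff.mpr fun i _ => hu i
  have hS : (n : ℝ) / 2 < S.re := by
    rw [re_sum]
    calc (n : ℝ) / 2 = ∑ _i : Fin n, (1 / 2 : ℝ) := by simp; ring
      _ < ∑ i, ((1 - r i * z)⁻¹).re :=
        Finset.sum_lt_sum_of_nonempty ⟨⟨0, hn⟩, Finset.mem_univ _⟩
          fun i _ => half_lt_re_inv_one_sub (hz i)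
  have hS0 : S ≠ 0 := fun h => by
    rw [h, zero_re] at hS
    linarith [(by positivity : (0 : ℝ) ≤ n / 2)]
  have hden : Fden σ z = symPolyRev σ z * S := by
    rw [fden_eq, mul_fnum_eq hr hu]
    ring
  refine ⟨hden ▸ mul_ne_zero hQ hS0, ?_⟩
  have hzF : z * Frat σ z = (n - S) / S := by
    rw [Frat, mul_div_assoc', mul_fnum_eq hr hu, hden, mul_div_mul_left _ _ hQ]
  rw [hzF, norm_div, div_lt_one (norm_pos_iff.mpr hS0)]
  exact_mod_cast norm_ofReal_sub_lt_norm (Nat.cast_pos.mpr hn) hS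

end Costara

section Interpolation

variable {n : ℕ}

lemma differentiable_fnum (z : ℂ) : Differentiable ℂ fun σ : Fin n → ℂ => Fnum σ z := by
  unfold Fnum; fun_prop

lemma differentiable_fden (z : ℂ) : Differentiable ℂ fun σ : Fin n → ℂ => Fden σ z := by
  unfold Fden; fun_prop

lemma differentiable_symPoly (z : ℂ) : Differentiable ℂ fun σ : Fin n → ℂ => symPoly σ z := by
  unfold symPoly; fun_prop

lemma differentiable_symPolyRev (z : ℂ) :
    Differentiable ℂ fun σ : Fin n → ℂ => symPolyRev σ z := by
  unfold symPolyRev; fun_prop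

lemma continuous_fnum (σ : Fin n → ℂ) : Continuous (Fnum σ) := by
  unfold Fnum; fun_prop

lemma continuous_fden (σ : Fin n → ℂ) : Continuous (Fden σ) := by
  unfold Fden; fun_prop

theorem fden_ne_zero_and_norm_frat_lt_one (hn : 0 < n) {σ : Fin n → ℂ}
    (hσ : σ ∈ symPolydisc n) {z : ℂ} (hz : ‖z‖ = 1) : Fden σ z ≠ 0 ∧ ‖Frat σ z‖ < 1 := by
  obtain ⟨r, hr1, hr⟩ := exists_roots_of_mem_symPolydisc hσ
  simpa [hz] using fden_ne_zero_and_norm_mul_frat_lt_one hn (symPolyRev_eq_prod hr)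
    (z := z) (by simpa [hz] using hr1)

lemma symPolyRev_conj_ne_zero {σ : Fin n → ℂ} (hσ : σ ∈ symPolydisc n) {w : ℂ} (hw : ‖w‖ < 1) :
    symPolyRev σ (conj w) ≠ 0 := by
  obtain ⟨r, hr1, hr⟩ := exists_roots_of_mem_symPolydisc hσ
  rw [symPolyRev_eq_prod hr, Finset.prod_ne_zero_iff]
  intro i _
  rw [mul_comm]
  exact one_sub_conj_mul_ne_zero hw (hr1 i)

lemma norm_symPoly_le_norm_symPolyRev_conj {σ : Fin n → ℂ} (hσ : σ ∈ symPolydisc n) {w : ℂ}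
    (hw : ‖w‖ < 1) : ‖symPoly σ w‖ ≤ ‖symPolyRev σ (conj w)‖ := by
  obtain ⟨r, hr1, hr⟩ := exists_roots_of_mem_symPolydisc hσ
  rw [hr, symPolyRev_eq_prod hr, norm_prod, norm_prod]
  refine Finset.prod_le_prod (fun i _ => norm_nonneg _) fun i _ => ?_
  rw [norm_sub_rev, mul_comm]
  exact (norm_sub_lt_norm_one_sub_conj_mul hw (hr1 i)).le

variable {f : ℂ → Fin n → ℂ} {a b : ℂ}

theorem norm_frat_le_pseudoDist (hn : 0 < n) (hf : DifferentiableOn ℂ f (ball 0 1))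
    (hmaps : MapsTo f (ball 0 1) (symPolydisc n)) (ha : ‖a‖ < 1) (hb : ‖b‖ < 1) (hfa : f a = 0)
    {z : ℂ} (hz : ‖z‖ = 1) : ‖Frat (f b) z‖ ≤ pseudoDist a b := by
  have hF := fun μ (hμ : μ ∈ ball (0 : ℂ) 1) => fden_ne_zero_and_norm_frat_lt_one hn (hmaps hμ) hz
  refine norm_le_pseudoDist_of_mapsTo_ball (h := fun μ => Frat (f μ) z) ?_
    (fun μ hμ => mem_closedBall_zero_iff.mpr (hF μ hμ).2.le) ha hb (by simp [hfa, Frat, Fnum])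
  exact ((differentiable_fnum z).comp_differentiableOn hf).div
    ((differentiable_fden z).comp_differentiableOn hf) fun μ hμ => (hF μ hμ).1

theorem norm_pow_le_pseudoDist_of_symPoly_eq_zero (hf : DifferentiableOn ℂ f (ball 0 1))
    (hmaps : MapsTo f (ball 0 1) (symPolydisc n)) (ha : ‖a‖ < 1) (hb : ‖b‖ < 1) (hfa : f a = 0)
    {w : ℂ} (hw : ‖w‖ < 1) (hroot : symPoly (f b) w = 0) : ‖w‖ ^ n ≤ pseudoDist a b := by
  have hQ := fun μ (hμ : μ ∈ ball (0 : ℂ) 1) => symPolyRev_conj_ne_zero (hmaps hμ) hw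
  have hB := norm_le_pseudoDist_of_mapsTo_ball
    (h := fun μ => symPoly (f μ) w / symPolyRev (f μ) (conj w))
    (((differentiable_symPoly w).comp_differentiableOn hf).div
      ((differentiable_symPolyRev (conj w)).comp_differentiableOn hf) hQ)
    (fun μ hμ => by
      rw [mem_closedBall_zero_iff, norm_div, div_le_one (norm_pos_iff.mpr (hQ μ hμ))]
      exact norm_symPoly_le_norm_symPolyRev_conj (hmaps hμ) hw)
    hb ha (by simp [hroot])
  simpa [hfa, symPoly, symPolyRev, pseudoDist_comm] using hB

theorem inv_mul_sSup_norm_frat_sphere_lt_one (hn : 0 < n) {s r : Fin n → ℂ}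
    (hr : ∀ z, symPoly s z = ∏ i, (z - r i)) {t : ℝ} (ht : 0 < t) (hrt : ∀ i, ‖r i‖ < t) :
    1 / t * sSup ((fun z : ℂ => ‖Frat s z‖) '' sphere 0 (1 / t)) < 1 := by
  have hF : ∀ z ∈ sphere (0 : ℂ) (1 / t), Fden s z ≠ 0 ∧ ‖Frat s z‖ < t := by
    intro z hz
    rw [mem_sphere_zero_iff_norm] at hz
    have hrz : ∀ i, ‖r i * z‖ < 1 := fun i => by
      rw [norm_mul, hz, mul_one_div, div_lt_one ht]; exact hrt i
    obtain ⟨hden, hlt⟩ := fden_ne_zero_and_norm_mul_frat_lt_one hn (symPolyRev_eq_prod hr) hrz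
    refine ⟨hden, ?_⟩
    rwa [norm_mul, hz, one_div_mul_eq_div, div_lt_one ht] at hlt
  have hcont : ContinuousOn (fun z : ℂ => ‖Frat s z‖) (sphere 0 (1 / t)) :=
    ((continuous_fnum s).continuousOn.div (continuous_fden s).continuousOn
      fun z hz => (hF z hz).1).norm
  have hsup : sSup ((fun z : ℂ => ‖Frat s z‖) '' sphere 0 (1 / t)) < t :=
    ((isCompact_sphere 0 _).sSup_lt_iff_of_continuous
      (NormedSpace.sphere_nonempty.mpr (by positivity)) hcont t).mpr fun z hz => (hF z hz).2
  rwa [one_div_mul_eq_div, div_lt_one ht]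

theorem sInf_le_of_forall_norm_root_pow_le (hn : 0 < n) {s r : Fin n → ℂ}
    (hr : ∀ z, symPoly s z = ∏ i, (z - r i)) {m : ℝ} (hm : 0 ≤ m) (hrm : ∀ i, ‖r i‖ ^ n ≤ m) :
    sInf {x : ℝ | ∃ t : ℝ, 0 < t ∧
      1 / t * sSup ((fun z : ℂ => ‖Frat s z‖) '' sphere 0 (1 / t)) < 1 ∧ x = t ^ n} ≤ m := by
  refine le_of_forall_gt_imp_ge_of_dense fun c hc => csInf_le ⟨0, ?_⟩ ?_
  · rintro x ⟨t, ht, -, rfl⟩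
    positivity
  · have hc0 : 0 < c := hm.trans_lt hc
    have hcn : (c ^ (n : ℝ)⁻¹) ^ n = c := Real.rpow_inv_natCast_pow hc0.le hn.ne'
    refine ⟨c ^ (n : ℝ)⁻¹, by positivity, inv_mul_sSup_norm_frat_sphere_lt_one hn hr (by positivity)
      fun i => lt_of_pow_lt_pow_left₀ n (by positivity) ?_, hcn.symm⟩
    rw [hcn]
    exact (hrm i).trans_lt hc

end Interpolation

theorem two_point_interpolation_necessary (n : ℕ) (hn : 2 ≤ n)
    (ζ₁ ζ₂ : ℂ) (hζ₁ : ‖ζ₁‖ < 1) (hζ₂ : ‖ζ₂‖ < 1)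
    (s : Fin n → ℂ) (hs : s ∈ symPolydisc n)
    (f : ℂ → (Fin n → ℂ)) (hf : DifferentiableOn ℂ f (Metric.ball 0 1))
    (hmaps : Set.MapsTo f (Metric.ball 0 1) (symPolydisc n))
    (hf1 : f ζ₁ = 0) (hf2 : f ζ₂ = s) :
    max
      (sInf {x : ℝ | ∃ t : ℝ, 0 < t ∧
        (1 / t) * sSup ((fun z : ℂ => ‖Frat s z‖) '' Metric.sphere (0 : ℂ) (1 / t))
          < 1 ∧ x = t ^ n})
      (sSup ((fun z : ℂ => ‖Frat s z‖) '' Metric.sphere (0 : ℂ) 1))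
      ≤ ‖(ζ₂ - ζ₁) / (1 - (starRingEnd ℂ) ζ₁ * ζ₂)‖ := by
  have hn0 : 0 < n := by omega
  obtain ⟨r, hr1, hr⟩ := exists_roots_of_mem_symPolydisc hs
  have hroot_pow : ∀ i, ‖r i‖ ^ n ≤ pseudoDist ζ₁ ζ₂ := fun i =>
    norm_pow_le_pseudoDist_of_symPoly_eq_zero hf hmaps hζ₁ hζ₂ hf1 (hr1 i)
      (by rw [hf2, hr]; exact Finset.prod_eq_zero (Finset.mem_univ i) (sub_self _))
  refine max_le (sInf_le_of_forall_norm_root_pow_le hn0 hr (norm_nonneg _) hroot_pow) ?_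
  refine Real.sSup_le ?_ (norm_nonneg _)
  rintro _ ⟨z, hz, rfl⟩
  rw [← hf2]
  exact norm_frat_le_pseudoDist hn0 hf hmaps hζ₁ hζ₂ hf1 (by simpa using hz)
end

section
/- For every W in the spectral unit ball Ω_n, the Lempert function of Ω_n satisfies ℓ_{Ω_n}(0, W) = tanh⁻¹(r(W)), where r(W) is the spectral radius of W. -/
/-!
For the lower bound, let `φ` be a holomorphic disc in `Ωₙ` with `φ 0 = 0` and `φ ζ = W`, and write
`φ z = z ψ z`. On the circle `|z| = s < 1` we have `r(ψ z) ≤ 1/s`. The spectral radius obeys the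
maximum principle (Vesentini): by Gelfand's formula and compactness of the circle, a single power
`ψ ^ P` has norm at most `s⁻ᴾ` on the circle, so by the maximum modulus principle also inside,
whence `r(ψ ζ) ≤ 1/s`. Letting `s → 1` gives `r(W) ≤ |ζ|`, i.e. `ℓ(0, W) ≥ tanh⁻¹ r(W)`. For the
upper bound, the discs `z ↦ (z / t) W` with `r(W) < t < 1` join `0` to `W` at `ζ = t`.
Matrices are treated inside the Banach algebra of operators on `ℂⁿ`, where Gelfand's formula holds.
-/

open Set Metric

/-- The spectral radius of a complex `n × n` matrix: the maximum modulus of its eigenvalues. -/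
noncomputable def specRad {n : ℕ} (W : Matrix (Fin n) (Fin n) ℂ) : ℝ :=
  sSup ((fun z : ℂ => ‖z‖) '' spectrum ℂ W)

/-- The spectral unit ball `Ωₙ = {W ∈ Mₙ(ℂ) : r(W) < 1}`. -/
noncomputable def spectralUnitBall (n : ℕ) : Set (Matrix (Fin n) (Fin n) ℂ) :=
  {W | specRad W < 1}

attribute [local instance] Matrix.normedAddCommGroup Matrix.normedSpace

/-- The inverse hyperbolic tangent, `tanh⁻¹ x = (1/2) log((1+x)/(1−x))`. -/
noncomputable def artanh (x : ℝ) : ℝ :=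
  Real.log ((1 + x) / (1 - x)) / 2

/-- The Lempert function: `ℓ_Ω(z₁,z₂) = inf{p_D(0,ζ) : ζ ∈ D, ∃ φ ∈ 𝒪(D;Ω), φ(0)=z₁, φ(ζ)=z₂}`,
where `p_D(0,ζ) = tanh⁻¹(|ζ|)` is the Poincaré distance. -/
noncomputable def lempert {E : Type*} [NormedAddCommGroup E] [NormedSpace ℂ E]
    (Ω : Set E) (z₁ z₂ : E) : ℝ :=
  sInf {p : ℝ | ∃ ζ : ℂ, ‖ζ‖ < 1 ∧ p = artanh ‖ζ‖ ∧
    ∃ φ : ℂ → E, DifferentiableOn ℂ φ (Metric.ball 0 1) ∧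
      Set.MapsTo φ (Metric.ball 0 1) Ω ∧ φ 0 = z₁ ∧ φ ζ = z₂}

open Filter Topology
open scoped ENNReal NNReal

section SpectralRadius

theorem spectralRadius_smul_le {𝕜 A : Type*} [NormedField 𝕜] [Ring A] [Algebra 𝕜 A]
    (k : 𝕜) (a : A) : spectralRadius 𝕜 (k • a) ≤ ‖k‖ₑ * spectralRadius 𝕜 a := by
  rcases eq_or_ne k 0 with rfl | hk
  · simp
  refine iSup₂_le fun μ hμ => ?_
  rw [← Units.val_mk0 hk, ← Units.smul_def, spectrum.unit_smul_eq_smul] at hμ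
  obtain ⟨ν, hν, rfl⟩ := hμ
  simp only [Units.val_mk0, smul_eq_mul, nnnorm_mul, ENNReal.coe_mul, enorm_eq_nnnorm]
  gcongr
  exact le_iSup₂ (f := fun k (_ : k ∈ spectrum 𝕜 a) => (‖k‖₊ : ℝ≥0∞)) ν hν

variable {A : Type*} [NormedRing A] [NormedAlgebra ℂ A] [CompleteSpace A]

theorem exists_nnnorm_pow_lt_of_spectralRadius_lt {a : A} {C : ℝ≥0}
    (h : spectralRadius ℂ a < C) : ∃ N ≠ 0, ‖a ^ N‖₊ < C ^ N := by
  obtain ⟨N, hlt, hN⟩ :=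
    ((spectrum.pow_nnnorm_pow_one_div_tendsto_nhds_spectralRadius a).eventually_lt_const h
      |>.and (eventually_ne_atTop 0)).exists
  refine ⟨N, hN, ?_⟩
  have hN' : (0 : ℝ) < N := by positivity
  have := ENNReal.rpow_lt_rpow hlt hN'
  rw [← ENNReal.rpow_mul, one_div, inv_mul_cancel₀ hN'.ne', ENNReal.rpow_one,
    ENNReal.rpow_natCast] at this
  exact_mod_cast this

theorem IsCompact.exists_forall_nnnorm_pow_le {X : Type*} [TopologicalSpace X] {K : Set X}
    (hK : IsCompact K) {f : X → A} (hf : ContinuousOn f K) {C : ℝ≥0}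
    (h : ∀ x ∈ K, spectralRadius ℂ (f x) < C) : ∃ P ≠ 0, ∀ x ∈ K, ‖f x ^ P‖₊ ≤ C ^ P := by
  choose N hN hlt using fun x (hx : x ∈ K) => exists_nnnorm_pow_lt_of_spectralRadius_lt (h x hx)
  have hnhds : ∀ x (hx : x ∈ K), {y | ‖f y ^ N x hx‖₊ < C ^ N x hx} ∈ 𝓝[K] x := fun x hx =>
    (((hf x hx).pow _).nnnorm).eventually_lt_const (hlt x hx)
  obtain ⟨t, ht⟩ := hK.elim_nhdsWithin_subcover' _ hnhds
  have hP : ∏ x ∈ t, N x.1 x.2 ≠ 0 := Finset.prod_ne_zero_iff.mpr fun x _ => hN x.1 x.2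
  refine ⟨_, hP, fun y hy => ?_⟩
  obtain ⟨x, hxt, hyx⟩ := mem_iUnion₂.mp (ht hy)
  obtain ⟨m, hm⟩ := Finset.dvd_prod_of_mem (fun x : K => N x.1 x.2) hxt
  have hm0 : m ≠ 0 := right_ne_zero_of_mul (hm ▸ hP)
  rw [hm, pow_mul, pow_mul]
  calc ‖(f y ^ N x.1 x.2) ^ m‖₊ ≤ ‖f y ^ N x.1 x.2‖₊ ^ m :=
        nnnorm_pow_le' _ (Nat.pos_of_ne_zero hm0)
    _ ≤ (C ^ N x.1 x.2) ^ m := pow_le_pow_left₀ bot_le (le_of_lt hyx) m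

variable [NormOneClass A]

theorem spectralRadius_le_of_nnnorm_pow_le {a : A} {N : ℕ} (hN : N ≠ 0)
    {C : ℝ≥0} (h : ‖a ^ N‖₊ ≤ C ^ N) : spectralRadius ℂ a ≤ C := by
  refine (ENNReal.pow_le_pow_left_iff hN).mp ?_
  calc spectralRadius ℂ a ^ N ≤ spectralRadius ℂ (a ^ N) := spectrum.spectralRadius_pow_le a N hN
    _ ≤ ‖a ^ N‖₊ := spectrum.spectralRadius_le_nnnorm _
    _ ≤ (C : ℝ≥0∞) ^ N := mod_cast h

theorem spectralRadius_le_of_forall_mem_frontier {f : ℂ → A} {U : Set ℂ}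
    (hU : Bornology.IsBounded U) (hf : DiffContOnCl ℂ f U) {C : ℝ≥0∞}
    (hC : ∀ w ∈ frontier U, spectralRadius ℂ (f w) ≤ C) {z : ℂ} (hz : z ∈ closure U) :
    spectralRadius ℂ (f z) ≤ C := by
  refine le_of_forall_gt_imp_ge_of_dense fun C' hCC' => ?_
  induction C' with
  | top => exact le_top
  | coe C' =>
    have hK : IsCompact (frontier U) :=
      hU.isCompact_closure.of_isClosed_subset isClosed_frontier frontier_subset_closure
    obtain ⟨P, hP, hbound⟩ := hK.exists_forall_nnnorm_pow_le
      (hf.continuousOn.mono frontier_subset_closure) fun w hw => (hC w hw).trans_lt hCC'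
    refine spectralRadius_le_of_nnnorm_pow_le hP ?_
    have hfP : DiffContOnCl ℂ (fun w => f w ^ P) U :=
      ⟨hf.differentiableOn.pow P, hf.continuousOn.pow P⟩
    exact_mod_cast Complex.norm_le_of_forall_mem_frontier_norm_le hU hfP
      (fun w hw => mod_cast hbound w hw) hz

theorem spectralRadius_le_enorm_of_forall_spectralRadius_le_one {φ : ℂ → A}
    (hd : DifferentiableOn ℂ φ (ball 0 1)) (hφ : ∀ z ∈ ball (0 : ℂ) 1, spectralRadius ℂ (φ z) ≤ 1)
    (h0 : φ 0 = 0) {ζ : ℂ} (hζ : ζ ∈ ball (0 : ℂ) 1) : spectralRadius ℂ (φ ζ) ≤ ‖ζ‖ₑ := by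
  set ψ := dslope φ 0
  have hψd : DifferentiableOn ℂ ψ (ball 0 1) :=
    (Complex.differentiableOn_dslope (ball_mem_nhds 0 one_pos)).mpr hd
  have hφψ : ∀ z, φ z = z • ψ z := fun z => by
    simpa [h0] using (sub_smul_dslope φ 0 z).symm
  have hψ_sphere : ∀ s, 0 < s → s < 1 → ∀ w ∈ sphere (0 : ℂ) s,
      spectralRadius ℂ (ψ w) ≤ ENNReal.ofReal s⁻¹ := by
    intro s hs0 hs1 w hw
    rw [mem_sphere_zero_iff_norm] at hw
    have hw0 : w ≠ 0 := norm_pos_iff.mp (hw ▸ hs0)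
    calc spectralRadius ℂ (ψ w) = spectralRadius ℂ (w⁻¹ • φ w) := by
          rw [hφψ w, inv_smul_smul₀ hw0]
      _ ≤ ‖w⁻¹‖ₑ * 1 := by
          grw [spectralRadius_smul_le, hφ w (mem_ball_zero_iff.mpr (hw ▸ hs1))]
      _ = ENNReal.ofReal s⁻¹ := by rw [mul_one, ← ofReal_norm, norm_inv, hw]
  have hψζ : spectralRadius ℂ (ψ ζ) ≤ 1 := by
    have hζ1 : ‖ζ‖ < 1 := mem_ball_zero_iff.mp hζ
    refine ge_of_tendsto (x := 𝓝[<] (1 : ℝ)) (f := fun s : ℝ => ENNReal.ofReal s⁻¹) ?_ ?_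
    · have : ContinuousAt (fun s : ℝ => ENNReal.ofReal s⁻¹) 1 :=
        ENNReal.continuous_ofReal.continuousAt.comp (continuousAt_inv₀ one_ne_zero)
      simpa using this.tendsto.mono_left nhdsWithin_le_nhds
    · filter_upwards [Ioo_mem_nhdsLT hζ1] with s ⟨hζs, hs1⟩
      have hs0 : 0 < s := (norm_nonneg ζ).trans_lt hζs
      refine spectralRadius_le_of_forall_mem_frontier isBounded_ball
        (hψd.diffContOnCl_ball (closedBall_subset_ball hs1)) ?_ ?_
      · rw [frontier_ball 0 hs0.ne']
        exact hψ_sphere s hs0 hs1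
      · rw [closure_ball 0 hs0.ne', mem_closedBall_zero_iff]
        exact hζs.le
  calc spectralRadius ℂ (φ ζ) ≤ ‖ζ‖ₑ * spectralRadius ℂ (ψ ζ) := hφψ ζ ▸ spectralRadius_smul_le _ _
    _ ≤ ‖ζ‖ₑ := by grw [hψζ, mul_one]

end SpectralRadius

section Artanh

theorem artanh_eq_real_artanh {x : ℝ} (hx : x ∈ Icc (-1) 1) : artanh x = Real.artanh x := by
  rw [Real.artanh_eq_half_log hx, artanh]
  ring

theorem artanh_nonneg {x : ℝ} (hx₀ : 0 ≤ x) (hx₁ : x ≤ 1) : 0 ≤ artanh x := by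
  rw [artanh_eq_real_artanh ⟨by linarith, hx₁⟩]
  exact Real.artanh_nonneg hx₀

theorem artanh_le_artanh {x y : ℝ} (hx : -1 < x) (hy : y < 1) (hxy : x ≤ y) :
    artanh x ≤ artanh y := by
  rw [artanh_eq_real_artanh ⟨hx.le, by linarith⟩, artanh_eq_real_artanh ⟨by linarith, hy.le⟩]
  exact Real.artanh_le_artanh hx hy hxy

theorem continuousAt_artanh {x : ℝ} (hx : x ∈ Ioo (-1) 1) : ContinuousAt artanh x := by
  have h₁ : 1 - x ≠ 0 := by linarith [hx.2]
  have h₂ : (1 + x) / (1 - x) ≠ 0 := div_ne_zero (by linarith [hx.1]) h₁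
  unfold artanh
  fun_prop (disch := assumption)

end Artanh

section Lempert

variable {E : Type*} [NormedAddCommGroup E] [NormedSpace ℂ E]

def ExistsAnalyticDisc (Ω : Set E) (z₁ z₂ : E) (ζ : ℂ) : Prop :=
  ‖ζ‖ < 1 ∧ ∃ φ : ℂ → E, DifferentiableOn ℂ φ (ball 0 1) ∧ MapsTo φ (ball 0 1) Ω ∧
    φ 0 = z₁ ∧ φ ζ = z₂

variable {Ω : Set E} {z₁ z₂ : E}

theorem lempert_le {ζ : ℂ} (h : ExistsAnalyticDisc Ω z₁ z₂ ζ) :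
    lempert Ω z₁ z₂ ≤ artanh ‖ζ‖ := by
  obtain ⟨hζ, φ, hφ⟩ := h
  refine csInf_le ⟨0, ?_⟩ ⟨ζ, hζ, rfl, φ, hφ⟩
  rintro _ ⟨ζ', hζ', rfl, -⟩
  exact artanh_nonneg (norm_nonneg _) hζ'.le

theorem le_lempert {c : ℝ} (hne : ∃ ζ, ExistsAnalyticDisc Ω z₁ z₂ ζ)
    (h : ∀ ζ, ExistsAnalyticDisc Ω z₁ z₂ ζ → c ≤ artanh ‖ζ‖) : c ≤ lempert Ω z₁ z₂ := by
  obtain ⟨ζ, hζ, φ, hφ⟩ := hne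
  refine le_csInf ⟨_, ζ, hζ, rfl, φ, hφ⟩ ?_
  rintro _ ⟨ζ', hζ', rfl, hφ'⟩
  exact h ζ' ⟨hζ', hφ'⟩

end Lempert

section SpecRad

variable {n : ℕ}

theorem specRad_nonneg (M : Matrix (Fin n) (Fin n) ℂ) : 0 ≤ specRad M :=
  Real.sSup_nonneg <| by rintro _ ⟨μ, -, rfl⟩; exact norm_nonneg μ

theorem ofReal_specRad (M : Matrix (Fin n) (Fin n) ℂ) :
    ENNReal.ofReal (specRad M) = spectralRadius ℂ (Matrix.toEuclideanCLM (𝕜 := ℂ) M) := by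
  rw [spectralRadius, AlgEquiv.spectrum_eq]
  rcases (spectrum ℂ M).eq_empty_or_nonempty with h | h
  · simp [specRad, h]
  obtain ⟨k, hk, hsup⟩ := (h.image (‖·‖)).csSup_mem (M.finite_spectrum.image (‖·‖))
  refine le_antisymm ?_ (iSup₂_le fun μ hμ => ?_)
  · rw [specRad, ← hsup, ofReal_norm]
    exact le_iSup₂ (f := fun k (_ : k ∈ spectrum ℂ M) => (‖k‖₊ : ℝ≥0∞)) k hk
  · rw [← enorm_eq_nnnorm, ← ofReal_norm]
    exact ENNReal.ofReal_le_ofReal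
      (le_csSup (M.finite_spectrum.image _).bddAbove ⟨μ, hμ, rfl⟩)

theorem specRad_smul_le (c : ℂ) (M : Matrix (Fin n) (Fin n) ℂ) :
    specRad (c • M) ≤ ‖c‖ * specRad M := by
  rw [← ENNReal.ofReal_le_ofReal_iff (mul_nonneg (norm_nonneg c) (specRad_nonneg M)),
    ENNReal.ofReal_mul (norm_nonneg c), ofReal_specRad, ofReal_specRad, map_smul, ofReal_norm]
  exact spectralRadius_smul_le c _

theorem differentiable_toEuclideanCLM :
    Differentiable ℂ (Matrix.toEuclideanCLM (𝕜 := ℂ) (n := Fin n)) :=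
  (LinearMap.toContinuousLinearMap
    (Matrix.toEuclideanCLM (𝕜 := ℂ) (n := Fin n)).toAlgEquiv.toLinearMap).differentiable

theorem specRad_le_norm_of_existsAnalyticDisc (hn : 0 < n) {W : Matrix (Fin n) (Fin n) ℂ}
    {ζ : ℂ} (h : ExistsAnalyticDisc (spectralUnitBall n) 0 W ζ) : specRad W ≤ ‖ζ‖ := by
  obtain ⟨hζ, φ, hd, hm, h0, rfl⟩ := h
  have : Nonempty (Fin n) := ⟨⟨0, hn⟩⟩
  rw [← ENNReal.ofReal_le_ofReal_iff (norm_nonneg _), ofReal_specRad, ofReal_norm]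
  refine spectralRadius_le_enorm_of_forall_spectralRadius_le_one
    (differentiable_toEuclideanCLM.comp_differentiableOn hd) (fun z hz => ?_) (by simp [h0])
    (mem_ball_zero_iff.mpr hζ)
  rw [Function.comp_apply, ← ofReal_specRad]
  exact ENNReal.ofReal_le_one.mpr (hm hz).le

theorem existsAnalyticDisc_spectralUnitBall_of_specRad_lt {W : Matrix (Fin n) (Fin n) ℂ} {t : ℝ}
    (hWt : specRad W < t) (ht : t < 1) : ExistsAnalyticDisc (spectralUnitBall n) 0 W t := by
  have ht₀ : 0 < t := (specRad_nonneg W).trans_lt hWt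
  have hnorm : ‖(t : ℂ)‖ = t := Complex.norm_of_nonneg ht₀.le
  refine ⟨by rwa [hnorm], fun z => (z / t) • W, by fun_prop, fun z hz => ?_, by simp, ?_⟩
  · rw [mem_ball_zero_iff] at hz
    calc specRad ((z / t) • W) ≤ ‖z / t‖ * specRad W := specRad_smul_le _ W
      _ = ‖z‖ * specRad W / t := by rw [norm_div, hnorm, div_mul_eq_mul_div]
      _ < 1 := by
        rw [div_lt_one ht₀]
        nlinarith [specRad_nonneg W, norm_nonneg z]
  · simp [div_self (Complex.ofReal_ne_zero.mpr ht₀.ne')]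

end SpecRad

theorem lempert_spectralUnitBall_eq_artanh_specRad (n : ℕ) (hn : 2 ≤ n)
    (W : Matrix (Fin n) (Fin n) ℂ) (hW : W ∈ spectralUnitBall n) :
    lempert (spectralUnitBall n) 0 W = artanh (specRad W) := by
  have hr₀ := specRad_nonneg W
  have hr₁ : specRad W < 1 := hW
  have hdisc : ∀ t ∈ Ioo (specRad W) 1, lempert (spectralUnitBall n) 0 W ≤ artanh t := by
    rintro t ⟨hWt, ht⟩
    simpa [abs_of_pos (hr₀.trans_lt hWt)] using
      lempert_le (existsAnalyticDisc_spectralUnitBall_of_specRad_lt hWt ht)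
  refine le_antisymm ?_ ?_
  · have hcont := (continuousAt_artanh ⟨by linarith, hr₁⟩).tendsto
    refine ge_of_tendsto (hcont.mono_left (nhdsWithin_le_nhds (s := Ioi (specRad W)))) ?_
    filter_upwards [Ioo_mem_nhdsGT hr₁] using hdisc
  · have hmid : specRad W < (specRad W + 1) / 2 := by linarith
    refine le_lempert ⟨_, existsAnalyticDisc_spectralUnitBall_of_specRad_lt hmid (by linarith)⟩
      fun ζ hζ => artanh_le_artanh (by linarith) hζ.1 ?_
    exact specRad_le_norm_of_existsAnalyticDisc (by omega) hζ
end
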